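/- Consider a reduced q-algebraic equation whose q-factors have been collected, satisfying the existence condition, with 0 = α(Q₀) < α(Q₊), and let f be the formal power series solution. Set g_n = q^{−H(Q)n(n−h(Q))} f_n. Then there exist constants c > 0 and G > 0 such that |g_n| ≤ c Gⁿ for every n ≥ 0. -/

import Mathlib

open scoped Classical
open PowerSeries Filter Topology

noncomputable section

structure QFactor where
  a : ℕ
  alpha : List ℤ
  ne : alpha ≠ []
  sorted : alpha.Pairwise (· ≤ ·)

namespace QFactor

/-- the first exponent α₁ of a q-factor -/
def alphaFirst (A : QFactor) : ℤ := A.alpha.head A.ne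

/-- the last exponent α_ℓ of a q-factor -/
def alphaLast (A : QFactor) : ℤ := A.alpha.getLast A.ne

/-- the scope s(A) : the number of maximal exponents -/
def scope (A : QFactor) : ℕ := A.alpha.count A.alphaLast

/-- the action A f (z) = z^a f(q^{α₁} z) ⋯ f(q^{α_ℓ} z) -/
def act (q : ℂ) (A : QFactor) (f : PowerSeries ℂ) : PowerSeries ℂ :=
  (PowerSeries.X : PowerSeries ℂ) ^ A.a *
    (A.alpha.map fun j => PowerSeries.rescale (q ^ j) f).prod

/-- the height H(A) = α_ℓ / (2a) of a (shifting) q-factor -/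
def height (A : QFactor) : ℝ := (A.alphaLast : ℝ) / (2 * A.a)

end QFactor

/-- the q-algebraic equation P(z) + ∑_{A ∈ Q} r_A A f(z) = 0 -/
def QAlgEq {N : ℕ} (q : ℂ) (Q : Fin N → QFactor) (r : Fin N → ℂ)
    (P : Polynomial ℂ) (f : PowerSeries ℂ) : Prop :=
  (P : PowerSeries ℂ) + ∑ i, PowerSeries.C (r i) * (Q i).act q f = 0

/-- a q-algebraic equation is reduced if all its nonshifting q-factors are linear -/
def Reduced {N : ℕ} (Q : Fin N → QFactor) : Prop :=
  ∀ i, (Q i).a = 0 → (Q i).alpha.length = 1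

/-- the existence condition : ∑_{A ∈ Q₀} r_A q^{α₁ n} ≠ 0 for all n ≥ 0 -/
def ExistCond {N : ℕ} (q : ℂ) (Q : Fin N → QFactor) (r : Fin N → ℂ) : Prop :=
  ∀ n : ℕ, (∑ i, if (Q i).a = 0 then r i * q ^ ((Q i).alphaFirst * n) else 0) ≠ 0

/-- the radius of convergence of ∑ f_n zⁿ -/
def seriesRadius {𝕜 : Type*} [NormedField 𝕜] (f : ℕ → 𝕜) : ENNReal :=
  ⨆ (ρ : NNReal) (_ : ∃ C : ℝ, ∀ n : ℕ, ‖f n‖ * (ρ : ℝ) ^ n ≤ C), (ρ : ENNReal)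

/-- the branch power q^x = exp (x log q), for a fixed branch L of log q -/
def cpow' (L : ℂ) (x : ℝ) : ℂ := Complex.exp (x * L)

end

section AuxLemmas

open Finset

lemma sum_inv_sq_le' (s : ℕ) : ∑ k ∈ Finset.range (s+1), (1:ℝ)/((k:ℝ)+1)^2 ≤ 2 - 1/((s:ℝ)+1) := by
  induction s with
  | zero => norm_num
  | succ n ih =>
    rw [Finset.sum_range_succ]
    have h1 : (0:ℝ) < (n:ℝ)+1 := by positivity
    have key : (1:ℝ)/((n:ℝ)+1+1)^2 ≤ 1/((n:ℝ)+1) - 1/((n:ℝ)+1+1) := by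
      rw [div_sub_div _ _ (ne_of_gt h1) (by positivity)]
      rw [div_le_div_iff₀ (by positivity) (by positivity)]
      nlinarith
    push_cast
    linarith

lemma sum_inv_sq_le (s : ℕ) : ∑ k ∈ Finset.range (s+1), (1:ℝ)/((k:ℝ)+1)^2 ≤ 2 := by
  have h1 : (0:ℝ) < (s:ℝ)+1 := by positivity
  have h2 : (0:ℝ) ≤ 1/((s:ℝ)+1) := by positivity
  linarith [sum_inv_sq_le' s]

lemma termBound {k t s : ℕ} (hkt : k + t = s) :
    (1:ℝ)/(((k:ℝ)+1)^2*((t:ℝ)+1)^2) ≤ 4/((s:ℝ)+1)^2 * (1/((k:ℝ)+1)^2 + 1/((t:ℝ)+1)^2) := by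
  have hk : (0:ℝ) < (k:ℝ)+1 := by positivity
  have ht : (0:ℝ) < (t:ℝ)+1 := by positivity
  have hs : (0:ℝ) < (s:ℝ)+1 := by positivity
  have hsum : (k:ℝ) + 1 + ((t:ℝ)+1) = (s:ℝ) + 2 := by
    have : (k:ℝ) + (t:ℝ) = s := by exact_mod_cast congrArg Nat.cast hkt
    linarith
  rcases le_total ((s:ℝ)+1) (2*((k:ℝ)+1)) with hc | hc
  · have h1 : ((s:ℝ)+1)^2 ≤ 4*((k:ℝ)+1)^2 := by nlinarith
    have h3 : (1:ℝ)/(((k:ℝ)+1)^2*((t:ℝ)+1)^2) ≤ 4/((s:ℝ)+1)^2 * (1/((t:ℝ)+1)^2) := by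
      rw [div_mul_div_comm, div_le_div_iff₀ (by positivity) (by positivity)]
      nlinarith
    have hpos : (0:ℝ) ≤ 4/((s:ℝ)+1)^2 * (1/((k:ℝ)+1)^2) := by positivity
    linarith [h3]
  · have h0 : (s:ℝ)+1 ≤ 2*((t:ℝ)+1) := by linarith
    have h1 : ((s:ℝ)+1)^2 ≤ 4*((t:ℝ)+1)^2 := by nlinarith
    have h3 : (1:ℝ)/(((k:ℝ)+1)^2*((t:ℝ)+1)^2) ≤ 4/((s:ℝ)+1)^2 * (1/((k:ℝ)+1)^2) := by
      rw [div_mul_div_comm, div_le_div_iff₀ (by positivity) (by positivity)]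
      nlinarith
    have hpos : (0:ℝ) ≤ 4/((s:ℝ)+1)^2 * (1/((t:ℝ)+1)^2) := by positivity
    linarith [h3]

lemma antidiagSum (s : ℕ) :
    ∑ p ∈ Finset.HasAntidiagonal.antidiagonal s, ((1:ℝ)/((p.1:ℝ)+1)^2 + 1/((p.2:ℝ)+1)^2) ≤ 4 := by
  rw [Finset.Nat.sum_antidiagonal_eq_sum_range_succ_mk]
  rw [Finset.sum_add_distrib]
  have h1 : ∑ k ∈ Finset.range (s+1), (1:ℝ)/((k:ℝ)+1)^2 ≤ 2 := sum_inv_sq_le s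
  have h2 : ∑ k ∈ Finset.range (s+1), (1:ℝ)/(((s-k : ℕ):ℝ)+1)^2 ≤ 2 := by
    rw [← Finset.sum_range_reflect (fun k => (1:ℝ)/(((s-k:ℕ):ℝ)+1)^2)]
    have h4 : ∀ j ∈ Finset.range (s+1), (1:ℝ)/(((s-(s+1-1-j):ℕ):ℝ)+1)^2 = 1/((j:ℝ)+1)^2 := by
      intro j hj
      rw [Finset.mem_range] at hj
      have hj' : s - (s+1-1-j) = j := by omega
      rw [hj']
    rw [Finset.sum_congr rfl h4]
    exact h1
  linarith

lemma sorted_le_getLast : ∀ (L : List ℤ) (hL : L ≠ []), L.Pairwise (· ≤ ·) → ∀ a ∈ L, a ≤ L.getLast hL := by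
  intro L
  induction L with
  | nil => intro hL; exact absurd rfl hL
  | cons x T ih =>
    intro _ hs a ha
    rcases T with _ | ⟨y, T'⟩
    · simp only [List.mem_singleton] at ha
      simp [ha, List.getLast]
    · rw [List.getLast_cons (by simp : (y :: T') ≠ [])]
      rcases List.mem_cons.1 ha with rfl | hmem
      · exact (List.pairwise_cons.1 hs).1 _ (List.getLast_mem _)
      · exact ih (by simp) (List.pairwise_cons.1 hs).2 a hmem

lemma zpow_mul_nat (q : ℂ) (hq : q ≠ 0) (α : ℤ) (n : ℕ) : q ^ (α * n) = (q ^ α) ^ n := by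
  induction n with
  | zero => simp
  | succ k ihk =>
    have e : α * ((k+1 : ℕ):ℤ) = α * k + α := by push_cast; ring
    rw [e, zpow_add₀ hq, ihk, pow_succ]

lemma pos_lower_bound (u : ℕ → ℝ) (h1 : ∀ n, 0 < u n) (b : ℝ) (hb : 0 < b) (N : ℕ)
    (h2 : ∀ n, N ≤ n → b ≤ u n) : ∃ m, 0 < m ∧ ∀ n, m ≤ u n := by
  rcases Nat.eq_zero_or_pos N with hN | hN
  · exact ⟨b, hb, fun n => h2 n (hN ▸ Nat.zero_le n)⟩
  · have hne : (Finset.range N).Nonempty := ⟨0, Finset.mem_range.2 hN⟩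
    refine ⟨min b ((Finset.range N).inf' hne u), lt_min hb ?_, fun n => ?_⟩
    · obtain ⟨j, _, hje⟩ := Finset.exists_mem_eq_inf' hne u
      rw [hje]; exact h1 j
    · rcases lt_or_ge n N with hn | hn
      · exact le_trans (min_le_right _ _) (Finset.inf'_le u (Finset.mem_range.2 hn))
      · exact le_trans (min_le_left _ _) (h2 n hn)

lemma QFactor.ext' {A B : QFactor} (h1 : A.a = B.a) (h2 : A.alpha = B.alpha) : A = B := by
  obtain ⟨a1, l1, n1, s1⟩ := A
  obtain ⟨a2, l2, n2, s2⟩ := B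
  dsimp at h1 h2
  subst h1; subst h2
  rfl

lemma norm_cpow' (q L : ℂ) (hL : Complex.exp L = q) (x : ℝ) : ‖cpow' L x‖ = ‖q‖ ^ x := by
  have hq : ‖q‖ = Real.exp L.re := by
    rw [← hL, Complex.norm_exp]
  rw [cpow', Complex.norm_exp, hq,
    ← Real.exp_log (Real.exp_pos L.re), Real.log_exp, ← Real.exp_mul]
  congr 1
  rw [Complex.mul_re]
  simp
  ring

lemma prodBound (q : ℂ) (hq : 1 < ‖q‖) (f : PowerSeries ℂ) (H hh : ℝ) (hH : 0 ≤ H)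
    (c G : ℝ) (hc : 0 ≤ c) (hG : 0 ≤ G) :
    ∀ (L : List ℤ), L ≠ [] → ∀ β : ℤ, (∀ α ∈ L, α ≤ β) → ∀ s : ℕ,
    (∀ k, k ≤ s → ‖PowerSeries.coeff k f‖ ≤
        ‖q‖ ^ (H * k * ((k:ℝ) - hh)) * (c * G ^ k / ((k:ℝ)+1) ^ 2)) →
    ‖PowerSeries.coeff s ((L.map fun j => PowerSeries.rescale (q ^ j) f).prod)‖ ≤
      16 ^ (L.length - 1) * c ^ L.length *
        (‖q‖ ^ ((β : ℝ) * s + H * s * ((s:ℝ) - hh)) * G ^ s / ((s:ℝ)+1) ^ 2) := by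
  have hq0 : (0:ℝ) < ‖q‖ := lt_trans one_pos hq
  have factor : ∀ (a : ℤ) (β : ℤ), a ≤ β → ∀ s k : ℕ, k ≤ s →
      (∀ k, k ≤ s → ‖PowerSeries.coeff k f‖ ≤
        ‖q‖ ^ (H * k * ((k:ℝ) - hh)) * (c * G ^ k / ((k:ℝ)+1) ^ 2)) →
      ‖PowerSeries.coeff k (PowerSeries.rescale (q ^ a) f)‖ ≤
        ‖q‖ ^ ((β:ℝ) * k + H * k * ((k:ℝ) - hh)) * (c * G ^ k / ((k:ℝ)+1) ^ 2) := by
    intro a β hab s k hks hcoef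
    rw [PowerSeries.coeff_rescale, norm_mul, norm_pow, norm_zpow]
    have e1 : (‖q‖ ^ (a:ℤ)) ^ k = ‖q‖ ^ ((a:ℝ) * k) := by
      rw [← Real.rpow_intCast ‖q‖ a, ← Real.rpow_natCast (‖q‖ ^ ((a:ℝ))) k,
        ← Real.rpow_mul (le_of_lt hq0)]
    rw [e1]
    calc ‖q‖ ^ ((a:ℝ) * k) * ‖(PowerSeries.coeff k) f‖
        ≤ ‖q‖ ^ ((a:ℝ) * k) * (‖q‖ ^ (H * k * ((k:ℝ) - hh)) * (c * G ^ k / ((k:ℝ)+1) ^ 2)) := by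
          exact mul_le_mul_of_nonneg_left (hcoef k hks) (le_of_lt (Real.rpow_pos_of_pos hq0 _))
      _ = ‖q‖ ^ ((a:ℝ) * k + H * k * ((k:ℝ) - hh)) * (c * G ^ k / ((k:ℝ)+1) ^ 2) := by
          rw [Real.rpow_add hq0]; ring
      _ ≤ ‖q‖ ^ ((β:ℝ) * k + H * k * ((k:ℝ) - hh)) * (c * G ^ k / ((k:ℝ)+1) ^ 2) := by
          apply mul_le_mul_of_nonneg_right _ (by positivity)
          apply Real.rpow_le_rpow_left_iff hq |>.2
          have : (a:ℝ) ≤ (β:ℝ) := by exact_mod_cast hab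
          nlinarith [Nat.cast_nonneg (α := ℝ) k]
  intro L
  induction L with
  | nil => intro hne; exact absurd rfl hne
  | cons a L ih =>
    rcases L with _ | ⟨b, T⟩
    · intro _ β hβ s hcoef
      simp only [List.map_cons, List.map_nil, List.prod_cons, List.prod_nil, mul_one,
        List.length_cons, List.length_nil]
      have hfac := factor a β (hβ a (List.mem_cons_self)) s s le_rfl hcoef
      calc ‖(PowerSeries.coeff s) ((PowerSeries.rescale (q ^ a)) f)‖
          ≤ ‖q‖ ^ ((β:ℝ) * s + H * s * ((s:ℝ) - hh)) * (c * G ^ s / ((s:ℝ)+1) ^ 2) := hfac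
        _ = 16 ^ (0+1-1) * c ^ (0+1) * (‖q‖ ^ ((β:ℝ) * s + H * s * ((s:ℝ) - hh)) * G ^ s / ((s:ℝ)+1) ^ 2) := by
            simp; ring
    · intro _ β hβ s hcoef
      set M := b :: T with hM
      have hMne : M ≠ [] := by simp [hM]
      simp only [List.map_cons, List.prod_cons] at *
      set Pr := ((M.map fun j => PowerSeries.rescale (q ^ j) f).prod) with hPr
      set m := M.length with hm
      have hm1 : 1 ≤ m := List.length_pos_iff.mpr hMne
      set X := (β:ℝ) * s + H * s * ((s:ℝ) - hh) with hX
      have hDnn : 0 ≤ 16 ^ (m - 1) * c ^ (m+1) * (‖q‖ ^ X * G ^ s) := by positivity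
      have key : ∀ p ∈ Finset.HasAntidiagonal.antidiagonal s,
          ‖(PowerSeries.coeff p.1) ((PowerSeries.rescale (q ^ a)) f)‖ * ‖(PowerSeries.coeff p.2) Pr‖ ≤
          16 ^ (m - 1) * c ^ (m+1) * (‖q‖ ^ X * G ^ s) *
            (4/((s:ℝ)+1)^2 * (1/((p.1:ℝ)+1)^2 + 1/((p.2:ℝ)+1)^2)) := by
        rintro ⟨k, t⟩ hp
        have hkt : k + t = s := Finset.HasAntidiagonal.mem_antidiagonal.1 hp
        have hks : k ≤ s := by omega
        have hts : t ≤ s := by omega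
        have b1 := factor a β (hβ a (List.mem_cons_self)) s k hks hcoef
        have b2 := ih hMne β (fun α hα => hβ α (List.mem_cons_of_mem a hα)) t
          (fun k hk => hcoef k (le_trans hk hts))
        have hb1nn : 0 ≤ ‖q‖ ^ ((β:ℝ) * k + H * k * ((k:ℝ) - hh)) * (c * G ^ k / ((k:ℝ)+1) ^ 2) := by
          positivity
        calc ‖(PowerSeries.coeff k) ((PowerSeries.rescale (q ^ a)) f)‖ * ‖(PowerSeries.coeff t) Pr‖
            ≤ (‖q‖ ^ ((β:ℝ) * k + H * k * ((k:ℝ) - hh)) * (c * G ^ k / ((k:ℝ)+1) ^ 2)) *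
              (16 ^ (m - 1) * c ^ m * (‖q‖ ^ ((β:ℝ) * t + H * t * ((t:ℝ) - hh)) * G ^ t / ((t:ℝ)+1) ^ 2)) :=
              mul_le_mul b1 b2 (norm_nonneg _) hb1nn
          _ = 16 ^ (m - 1) * c ^ (m+1) *
                ((‖q‖ ^ ((β:ℝ) * k + H * k * ((k:ℝ) - hh)) * ‖q‖ ^ ((β:ℝ) * t + H * t * ((t:ℝ) - hh))) * (G ^ k * G ^ t)) *
                (1/(((k:ℝ)+1)^2 * ((t:ℝ)+1)^2)) := by
              rw [one_div, mul_inv]; ring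
          _ = 16 ^ (m - 1) * c ^ (m+1) *
                (‖q‖ ^ (((β:ℝ) * k + H * k * ((k:ℝ) - hh)) + ((β:ℝ) * t + H * t * ((t:ℝ) - hh))) * (G ^ k * G ^ t)) *
                (1/(((k:ℝ)+1)^2 * ((t:ℝ)+1)^2)) := by
              rw [← Real.rpow_add hq0]
          _ ≤ 16 ^ (m - 1) * c ^ (m+1) * (‖q‖ ^ X * G ^ s) * (1/(((k:ℝ)+1)^2 * ((t:ℝ)+1)^2)) := by
              apply mul_le_mul_of_nonneg_right _ (by positivity)
              apply mul_le_mul_of_nonneg_left _ (by positivity)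
              have hGkt : G ^ k * G ^ t = G ^ s := by rw [← pow_add, hkt]
              rw [hGkt]
              apply mul_le_mul_of_nonneg_right _ (by positivity)
              apply Real.rpow_le_rpow_left_iff hq |>.2
              have hksr : (k:ℝ) + t = s := by exact_mod_cast hkt
              rw [hX, ← hksr]
              nlinarith [mul_nonneg (mul_nonneg hH (Nat.cast_nonneg (α := ℝ) k)) (Nat.cast_nonneg (α := ℝ) t)]
          _ ≤ 16 ^ (m - 1) * c ^ (m+1) * (‖q‖ ^ X * G ^ s) *
                (4/((s:ℝ)+1)^2 * (1/((k:ℝ)+1)^2 + 1/((t:ℝ)+1)^2)) := by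
              exact mul_le_mul_of_nonneg_left (termBound hkt) hDnn
      calc ‖(PowerSeries.coeff s) ((PowerSeries.rescale (q ^ a)) f * Pr)‖
          = ‖∑ p ∈ Finset.HasAntidiagonal.antidiagonal s,
              (PowerSeries.coeff p.1) ((PowerSeries.rescale (q ^ a)) f) * (PowerSeries.coeff p.2) Pr‖ := by
            rw [PowerSeries.coeff_mul]
        _ ≤ ∑ p ∈ Finset.HasAntidiagonal.antidiagonal s,
              ‖(PowerSeries.coeff p.1) ((PowerSeries.rescale (q ^ a)) f)‖ * ‖(PowerSeries.coeff p.2) Pr‖ := by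
            refine (norm_sum_le _ _).trans (le_of_eq ?_)
            exact Finset.sum_congr rfl (fun p _ => norm_mul _ _)
        _ ≤ ∑ p ∈ Finset.HasAntidiagonal.antidiagonal s,
              16 ^ (m - 1) * c ^ (m+1) * (‖q‖ ^ X * G ^ s) *
                (4/((s:ℝ)+1)^2 * (1/((p.1:ℝ)+1)^2 + 1/((p.2:ℝ)+1)^2)) :=
            Finset.sum_le_sum key
        _ = 16 ^ (m - 1) * c ^ (m+1) * (‖q‖ ^ X * G ^ s) * (4/((s:ℝ)+1)^2) *
              ∑ p ∈ Finset.HasAntidiagonal.antidiagonal s, ((1:ℝ)/((p.1:ℝ)+1)^2 + 1/((p.2:ℝ)+1)^2) := by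
            rw [Finset.mul_sum]; exact Finset.sum_congr rfl (fun p _ => by ring)
        _ ≤ 16 ^ (m - 1) * c ^ (m+1) * (‖q‖ ^ X * G ^ s) * (4/((s:ℝ)+1)^2) * 4 := by
            exact mul_le_mul_of_nonneg_left (antidiagSum s) (by positivity)
        _ = 16 ^ ((a :: M).length - 1) * c ^ ((a :: M).length) *
              (‖q‖ ^ X * G ^ s / ((s:ℝ)+1) ^ 2) := by
            have hlen : (a :: M).length = m + 1 := by simp [hm]
            rw [hlen]
            have h16 : (16:ℝ) ^ (m + 1 - 1) = 16 ^ (m-1) * 16 := by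
              have hmm : m + 1 - 1 = (m-1)+1 := by omega
              rw [hmm, pow_succ]
            rw [h16]
            ring

lemma shiftBound (q : ℂ) (hq : 1 < ‖q‖) (f : PowerSeries ℂ) (H hh : ℝ) (hH : 0 ≤ H)
    (c G : ℝ) (hc : 1 ≤ c) (hG : 1 ≤ G) (A : QFactor) (ha : 0 < A.a)
    (hht : (A.alphaLast : ℝ) ≤ 2 * (A.a : ℝ) * H) (n : ℕ)
    (hcoef : ∀ k, k < n → ‖PowerSeries.coeff k f‖ ≤
      ‖q‖ ^ (H * k * ((k:ℝ) - hh)) * (c * G ^ k / ((k:ℝ)+1) ^ 2)) :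
    ‖PowerSeries.coeff n (A.act q f)‖ ≤
      (16 ^ A.alpha.length * ‖q‖ ^ (H * (A.a:ℝ)^2 + H * hh * (A.a:ℝ) + |(A.alphaLast:ℝ)| * (A.a:ℝ))
        * ((A.a:ℝ)+1) ^ 2) * c ^ A.alpha.length *
        (‖q‖ ^ (H * n * ((n:ℝ) - hh)) * G ^ (n - 1) / ((n:ℝ)+1) ^ 2) := by
  have hq0 : (0:ℝ) < ‖q‖ := lt_trans one_pos hq
  rw [QFactor.act, PowerSeries.coeff_X_pow_mul']
  split_ifs with han
  · set s := n - A.a with hsdef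
    have hc0 : (0:ℝ) ≤ c := le_trans zero_le_one hc
    have hG0 : (0:ℝ) ≤ G := le_trans zero_le_one hG
    have hb := prodBound q hq f H hh hH c G hc0 hG0 A.alpha A.ne A.alphaLast
      (fun α hα => sorted_le_getLast A.alpha A.ne A.sorted α hα) s
      (fun k hk => hcoef k (by omega))
    refine hb.trans ?_
    have hsr : ((s:ℕ):ℝ) = (n:ℝ) - (A.a:ℝ) := by
      rw [hsdef]; push_cast [Nat.cast_sub han]; ring
    have har : (0:ℝ) < (A.a:ℝ) := by exact_mod_cast ha
    have hnr : (A.a:ℝ) ≤ (n:ℝ) := by exact_mod_cast han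
    have e1 : ‖q‖ ^ ((A.alphaLast:ℝ) * s + H * s * ((s:ℝ) - hh)) ≤
        ‖q‖ ^ (H * (A.a:ℝ)^2 + H * hh * (A.a:ℝ) + |(A.alphaLast:ℝ)| * (A.a:ℝ)) *
        ‖q‖ ^ (H * n * ((n:ℝ) - hh)) := by
      rw [← Real.rpow_add hq0]
      apply (Real.rpow_le_rpow_left_iff hq).2
      rw [hsr]
      nlinarith [le_abs_self (A.alphaLast:ℝ), neg_abs_le (A.alphaLast:ℝ),
        mul_nonneg (sub_nonneg.2 hht) (Nat.cast_nonneg (α := ℝ) n)]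
    have e2 : G ^ s ≤ G ^ (n - 1) := pow_le_pow_right₀ hG (by omega)
    have e3 : (1:ℝ)/((s:ℝ)+1)^2 ≤ ((A.a:ℝ)+1)^2/((n:ℝ)+1)^2 := by
      rw [div_le_div_iff₀ (by positivity) (by positivity)]
      have key : (n:ℝ)+1 ≤ ((A.a:ℝ)+1)*((s:ℝ)+1) := by
        rw [hsr]; nlinarith
      nlinarith [mul_self_le_mul_self (by positivity : (0:ℝ) ≤ (n:ℝ)+1) key,
        sq_nonneg ((s:ℝ)+1)]
    calc 16 ^ (A.alpha.length - 1) * c ^ A.alpha.length *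
          (‖q‖ ^ ((A.alphaLast:ℝ) * s + H * s * ((s:ℝ) - hh)) * G ^ s / ((s:ℝ)+1) ^ 2)
        = (16 ^ (A.alpha.length - 1) * c ^ A.alpha.length) *
          (‖q‖ ^ ((A.alphaLast:ℝ) * s + H * s * ((s:ℝ) - hh)) * (G ^ s * (1/((s:ℝ)+1) ^ 2))) := by
          ring
      _ ≤ (16 ^ A.alpha.length * c ^ A.alpha.length) *
          ((‖q‖ ^ (H * (A.a:ℝ)^2 + H * hh * (A.a:ℝ) + |(A.alphaLast:ℝ)| * (A.a:ℝ)) *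
            ‖q‖ ^ (H * n * ((n:ℝ) - hh))) * (G ^ (n-1) * (((A.a:ℝ)+1)^2/((n:ℝ)+1)^2))) := by
          apply mul_le_mul
          · exact mul_le_mul_of_nonneg_right
              (pow_le_pow_right₀ (by norm_num) (Nat.sub_le _ _)) (by positivity)
          · exact mul_le_mul e1 (mul_le_mul e2 e3 (by positivity) (by positivity))
              (by positivity) (by positivity)
          · positivity
          · positivity
      _ = (16 ^ A.alpha.length * ‖q‖ ^ (H * (A.a:ℝ)^2 + H * hh * (A.a:ℝ) + |(A.alphaLast:ℝ)| * (A.a:ℝ))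
            * ((A.a:ℝ)+1) ^ 2) * c ^ A.alpha.length *
          (‖q‖ ^ (H * n * ((n:ℝ) - hh)) * G ^ (n - 1) / ((n:ℝ)+1) ^ 2) := by
          ring
  · rw [norm_zero]
    positivity

end AuxLemmas
set_option maxHeartbeats 3000000 in
/-- for a reduced q-algebraic equation with collected q-factors satisfying
the existence condition, with 0 = α(Q₀) < α(Q₊), the coefficients
g_n = q^{−H(Q)n(n−h(Q))} f_n of the solution grow at most geometrically. -/
theorem stmt14 {N : ℕ} (q : ℂ) (hq : 1 < ‖q‖) (L : ℂ) (hL : Complex.exp L = q)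
    (Q : Fin N → QFactor) (r : Fin N → ℂ) (hr : ∀ i, r i ≠ 0) (P : Polynomial ℂ)
    (hred : Reduced Q) (hcol : Function.Injective Q) (hcond : ExistCond q Q r)
    -- α(Q₀) = 0
    (hα0 : (∀ i, (Q i).a = 0 → (Q i).alphaLast ≤ 0) ∧ ∃ i, (Q i).a = 0 ∧ (Q i).alphaLast = 0)
    -- α(Q₊) > 0 (in particular Q₊ ≠ ∅)
    (hαplus : ∃ i, 0 < (Q i).a ∧ 0 < (Q i).alphaLast)
    -- H is the height H(Q)
    (H : ℝ) (hH : IsGreatest {x : ℝ | ∃ i, 0 < (Q i).a ∧ x = (Q i).height} H)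
    -- h is the co-height h(Q)
    (h : ℕ) (hh : IsLeast {m : ℕ | ∃ i, 0 < (Q i).a ∧
      2 * ((Q i).a : ℝ) * H = ((Q i).alphaLast : ℝ) ∧ (Q i).a = m} h)
    (f : PowerSeries ℂ) (hf : QAlgEq q Q r P f) :
    ∃ c : ℝ, 0 < c ∧ ∃ G : ℝ, 0 < G ∧ ∀ n : ℕ,
      ‖cpow' L (-(H * n * ((n : ℝ) - (h : ℝ)))) * PowerSeries.coeff n f‖ ≤ c * G ^ n := by
  classical
  have hq0 : (0:ℝ) < ‖q‖ := lt_trans one_pos hq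
  have hqne : q ≠ 0 := by
    intro hz; rw [hz] at hq; simp at hq; linarith
  have hhr0 : (0:ℝ) ≤ (h:ℝ) := Nat.cast_nonneg h
  -- H is positive
  have Hpos : 0 < H := by
    obtain ⟨j, hja, hjl⟩ := hαplus
    have hle := hH.2 ⟨j, hja, rfl⟩
    have hjpos : 0 < (Q j).height := by
      rw [QFactor.height]
      have h1 : (0:ℝ) < ((Q j).alphaLast : ℝ) := by exact_mod_cast hjl
      have h2 : (0:ℝ) < ((Q j).a : ℝ) := by exact_mod_cast hja
      positivity
    linarith
  have hH0 : (0:ℝ) ≤ H := le_of_lt Hpos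
  have hcrest : ∀ i, 0 < (Q i).a → ((Q i).alphaLast : ℝ) ≤ 2 * ((Q i).a:ℝ) * H := by
    intro i hia
    have hle := hH.2 ⟨i, hia, rfl⟩
    rw [QFactor.height] at hle
    have h2 : (0:ℝ) < 2 * ((Q i).a : ℝ) := by
      have : (0:ℝ) < ((Q i).a : ℝ) := by exact_mod_cast hia
      linarith
    have := (div_le_iff₀ h2).1 hle
    linarith
  -- nonshifting factors are linear
  have hlin : ∀ i, (Q i).a = 0 → (Q i).alpha = [(Q i).alphaFirst] ∧
      (Q i).alphaLast = (Q i).alphaFirst := by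
    intro i hia
    obtain ⟨x, hx⟩ := List.length_eq_one_iff.1 (hred i hia)
    have h1 : (Q i).alphaFirst = x := by
      rw [QFactor.alphaFirst]; simp [hx]
    have h2 : (Q i).alphaLast = x := by
      rw [QFactor.alphaLast]; simp [hx]
    exact ⟨by rw [hx, h1], by rw [h1, h2]⟩
  obtain ⟨istar, hsa, hsl⟩ := hα0.2
  have hstar0 : (Q istar).alphaFirst = 0 := by rw [← (hlin istar hsa).2]; exact hsl
  have huniq : ∀ i, (Q i).a = 0 → (Q i).alphaFirst = 0 → i = istar := by
    intro i hia hif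
    apply hcol
    apply QFactor.ext' (by rw [hia, hsa])
    rw [(hlin i hia).1, (hlin istar hsa).1, hif, hstar0]
  have hneg : ∀ i, (Q i).a = 0 → i ≠ istar → (Q i).alphaFirst ≤ -1 := by
    intro i hia hne
    have h1 : (Q i).alphaFirst ≤ 0 := by rw [← (hlin i hia).2]; exact hα0.1 i hia
    have h2 : (Q i).alphaFirst ≠ 0 := fun hz => hne (huniq i hia hz)
    omega
  -- the denominator sequence
  set S : ℕ → ℂ := fun n => ∑ i, if (Q i).a = 0 then r i * q ^ ((Q i).alphaFirst * n) else 0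
    with hSdef
  have hS0 : ∀ n, S n ≠ 0 := hcond
  set θ : ℝ := ‖q‖⁻¹ with hθdef
  have hθ0 : (0:ℝ) ≤ θ := by positivity
  have hθ1 : θ < 1 := inv_lt_one_of_one_lt₀ hq
  set R : ℝ := ∑ i, ‖r i‖ with hRdef
  have hR0 : 0 ≤ R := Finset.sum_nonneg (fun i _ => norm_nonneg _)
  have hSdiff : ∀ n : ℕ, ‖S n - r istar‖ ≤ R * θ ^ n := by
    intro n
    have hFmem : istar ∈ Finset.univ.filter (fun i => (Q i).a = 0) := by simp [hsa]
    have e0 : S n = ∑ i ∈ Finset.univ.filter (fun i => (Q i).a = 0),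
        r i * q ^ ((Q i).alphaFirst * n) := (Finset.sum_filter _ _).symm
    have e1 := Finset.add_sum_erase (Finset.univ.filter (fun i => (Q i).a = 0))
      (fun i => r i * q ^ ((Q i).alphaFirst * n)) hFmem
    have estar : r istar * q ^ ((Q istar).alphaFirst * n) = r istar := by
      rw [hstar0]; simp
    have e1' : r istar * q ^ ((Q istar).alphaFirst * n) +
        ∑ i ∈ (Finset.univ.filter (fun i => (Q i).a = 0)).erase istar,
          r i * q ^ ((Q i).alphaFirst * n) =
        ∑ i ∈ Finset.univ.filter (fun i => (Q i).a = 0), r i * q ^ ((Q i).alphaFirst * n) := e1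
    have e2 : S n - r istar = ∑ i ∈ (Finset.univ.filter (fun i => (Q i).a = 0)).erase istar,
        r i * q ^ ((Q i).alphaFirst * n) := by
      rw [e0, ← e1', estar]; ring
    rw [e2]
    calc ‖∑ i ∈ (Finset.univ.filter (fun i => (Q i).a = 0)).erase istar,
            r i * q ^ ((Q i).alphaFirst * n)‖
        ≤ ∑ i ∈ (Finset.univ.filter (fun i => (Q i).a = 0)).erase istar,
            ‖r i * q ^ ((Q i).alphaFirst * n)‖ := norm_sum_le _ _
      _ ≤ ∑ i ∈ (Finset.univ.filter (fun i => (Q i).a = 0)).erase istar, ‖r i‖ * θ ^ n := by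
          apply Finset.sum_le_sum
          intro i hi
          have hine : i ≠ istar := Finset.ne_of_mem_erase hi
          have hia : (Q i).a = 0 := (Finset.mem_filter.1 (Finset.mem_of_mem_erase hi)).2
          rw [norm_mul]
          apply mul_le_mul_of_nonneg_left _ (norm_nonneg (r i))
          rw [norm_zpow]
          have hexp : (Q i).alphaFirst * (n:ℤ) ≤ -(n:ℤ) := by
            have h1 := hneg i hia hine
            have hn0 : (0:ℤ) ≤ (n:ℤ) := Int.natCast_nonneg n
            nlinarith
          calc ‖q‖ ^ ((Q i).alphaFirst * (n:ℤ)) ≤ ‖q‖ ^ (-(n:ℤ)) :=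
                zpow_le_zpow_right₀ (le_of_lt hq) hexp
            _ = θ ^ n := by rw [zpow_neg, zpow_natCast, ← inv_pow]
      _ ≤ ∑ i, ‖r i‖ * θ ^ n := by
          apply Finset.sum_le_sum_of_subset_of_nonneg
          · intro i _; exact Finset.mem_univ i
          · intro i _ _; positivity
      _ = R * θ ^ n := by rw [hRdef, ← Finset.sum_mul]
  have hmS : ∃ m, 0 < m ∧ ∀ n, m ≤ ‖S n‖ := by
    have hrs0 : 0 < ‖r istar‖ := norm_pos_iff.2 (hr istar)
    have hε : (0:ℝ) < ‖r istar‖ / (2*(R+1)) := by positivity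
    obtain ⟨N₀, hN₀⟩ := exists_pow_lt_of_lt_one hε hθ1
    apply pos_lower_bound _ (fun n => norm_pos_iff.2 (hS0 n)) (‖r istar‖/2) (by positivity) N₀
    intro n hn
    have hθn : θ ^ n ≤ θ ^ N₀ := pow_le_pow_of_le_one hθ0 (le_of_lt hθ1) hn
    have h5 : R * θ ^ n ≤ ‖r istar‖ / 2 := by
      have h51 : R * θ ^ n ≤ R * (‖r istar‖ / (2*(R+1))) :=
        mul_le_mul_of_nonneg_left (le_of_lt (lt_of_le_of_lt hθn hN₀)) hR0
      have h52 : R * (‖r istar‖ / (2*(R+1))) ≤ (R+1) * (‖r istar‖ / (2*(R+1))) := by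
        apply mul_le_mul_of_nonneg_right (by linarith) (le_of_lt hε)
      have h53 : (R+1) * (‖r istar‖ / (2*(R+1))) = ‖r istar‖ / 2 := by
        field_simp
      linarith
    have h8 : ‖r istar‖ ≤ ‖S n‖ + ‖S n - r istar‖ := by
      calc ‖r istar‖ = ‖S n - (S n - r istar)‖ := by rw [sub_sub_cancel]
        _ ≤ ‖S n‖ + ‖S n - r istar‖ := norm_sub_le _ _
    linarith [hSdiff n]
  obtain ⟨m, hm0, hmle⟩ := hmS
  -- the recursion
  have hrec : ∀ n : ℕ, S n * (PowerSeries.coeff n f) =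
      -(P.coeff n + ∑ i ∈ Finset.univ.filter (fun i => ¬ (Q i).a = 0),
        r i * PowerSeries.coeff n ((Q i).act q f)) := by
    intro n
    have h0 : PowerSeries.coeff n ((P : PowerSeries ℂ) +
        ∑ i, PowerSeries.C (r i) * (Q i).act q f) = 0 := by
      rw [hf]; simp
    rw [map_add, map_sum] at h0
    have h1 : ∀ i : Fin N, i ∈ Finset.univ →
        PowerSeries.coeff n (PowerSeries.C (r i) * (Q i).act q f) =
        r i * PowerSeries.coeff n ((Q i).act q f) := fun i _ =>
      PowerSeries.coeff_C_mul n _ _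
    rw [Finset.sum_congr rfl h1] at h0
    rw [← Finset.sum_filter_add_sum_filter_not Finset.univ (fun i => (Q i).a = 0)] at h0
    have h2 : ∀ i ∈ Finset.univ.filter (fun i => (Q i).a = 0),
        r i * PowerSeries.coeff n ((Q i).act q f) =
        (r i * q ^ ((Q i).alphaFirst * n)) * PowerSeries.coeff n f := by
      intro i hi
      have hia : (Q i).a = 0 := (Finset.mem_filter.1 hi).2
      rw [QFactor.act, hia, pow_zero, one_mul, (hlin i hia).1]
      simp only [List.map_cons, List.map_nil, List.prod_cons, List.prod_nil, mul_one]
      rw [PowerSeries.coeff_rescale, zpow_mul_nat q hqne _ n]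
      ring
    rw [Finset.sum_congr rfl h2, ← Finset.sum_mul] at h0
    have h3 : ∑ i ∈ Finset.univ.filter (fun i => (Q i).a = 0),
        (r i * q ^ ((Q i).alphaFirst * n)) = S n := by
      rw [hSdef]
      rw [Finset.sum_filter]
    rw [h3, Polynomial.coeff_coe] at h0
    linear_combination h0
  -- constants
  set Λ : ℕ := Finset.univ.sup (fun i : Fin N => (Q i).alpha.length) with hΛdef
  set c : ℝ := max 1 ((2/m) * ‖q‖ ^ (H*(h:ℝ)*(h:ℝ)/4) *
      ∑ k ∈ Finset.range (P.natDegree+1), ‖P.coeff k‖ * ((k:ℝ)+1)^2) with hcdef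
  have hc1 : (1:ℝ) ≤ c := le_max_left _ _
  have hc0 : (0:ℝ) < c := lt_of_lt_of_le one_pos hc1
  set B : ℝ := ∑ i ∈ Finset.univ.filter (fun i => ¬ (Q i).a = 0), ‖r i‖ *
      (16 ^ (Q i).alpha.length * ‖q‖ ^ (H*((Q i).a:ℝ)^2 + H*(h:ℝ)*((Q i).a:ℝ) +
        |((Q i).alphaLast:ℝ)| * ((Q i).a:ℝ)) * (((Q i).a:ℝ)+1)^2) with hBdef
  have hB0 : 0 ≤ B := Finset.sum_nonneg (fun i _ => by positivity)
  set G : ℝ := max 1 ((2/m) * c^Λ * B) with hGdef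
  have hG1 : (1:ℝ) ≤ G := le_max_left _ _
  have hG0 : (0:ℝ) < G := lt_of_lt_of_le one_pos hG1
  -- the key coefficient bound
  have key : ∀ n : ℕ, ‖PowerSeries.coeff n f‖ ≤
      ‖q‖ ^ (H*n*((n:ℝ)-(h:ℝ))) * (c * G ^ n / ((n:ℝ)+1)^2) := by
    intro n
    induction n using Nat.strong_induction_on with
    | _ n IH =>
    have hEnn : (0:ℝ) < ‖q‖ ^ (H*n*((n:ℝ)-(h:ℝ))) := Real.rpow_pos_of_pos hq0 _
    have hElow : ‖q‖ ^ (-(H*(h:ℝ)*(h:ℝ)/4)) ≤ ‖q‖ ^ (H*n*((n:ℝ)-(h:ℝ))) := by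
      apply (Real.rpow_le_rpow_left_iff hq).2
      nlinarith [sq_nonneg ((n:ℝ) - (h:ℝ)/2)]
    have h1 : m * ‖PowerSeries.coeff n f‖ ≤ ‖P.coeff n‖ +
        ∑ i ∈ Finset.univ.filter (fun i => ¬ (Q i).a = 0),
          ‖r i‖ * ‖PowerSeries.coeff n ((Q i).act q f)‖ := by
      calc m * ‖PowerSeries.coeff n f‖
          ≤ ‖S n‖ * ‖PowerSeries.coeff n f‖ :=
            mul_le_mul_of_nonneg_right (hmle n) (norm_nonneg _)
        _ = ‖S n * PowerSeries.coeff n f‖ := (norm_mul _ _).symm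
        _ = ‖P.coeff n + ∑ i ∈ Finset.univ.filter (fun i => ¬ (Q i).a = 0),
              r i * PowerSeries.coeff n ((Q i).act q f)‖ := by rw [hrec n, norm_neg]
        _ ≤ ‖P.coeff n‖ + ‖∑ i ∈ Finset.univ.filter (fun i => ¬ (Q i).a = 0),
              r i * PowerSeries.coeff n ((Q i).act q f)‖ := norm_add_le _ _
        _ ≤ ‖P.coeff n‖ + ∑ i ∈ Finset.univ.filter (fun i => ¬ (Q i).a = 0),
              ‖r i‖ * ‖PowerSeries.coeff n ((Q i).act q f)‖ := by
            apply add_le_add_right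
            refine (norm_sum_le _ _).trans (le_of_eq ?_)
            exact Finset.sum_congr rfl (fun i _ => norm_mul _ _)
    have hPb : ‖P.coeff n‖ ≤ m/2 * (‖q‖ ^ (H*n*((n:ℝ)-(h:ℝ))) * (c * G ^ n / ((n:ℝ)+1)^2)) := by
      rcases le_or_gt n P.natDegree with hn | hn
      · have hterm : ‖P.coeff n‖ * ((n:ℝ)+1)^2 ≤
            ∑ k ∈ Finset.range (P.natDegree+1), ‖P.coeff k‖ * ((k:ℝ)+1)^2 :=
          Finset.single_le_sum (f := fun k => ‖P.coeff k‖ * ((k:ℝ)+1)^2)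
            (fun k _ => by positivity) (Finset.mem_range.2 (by omega))
        have hcge : (2/m) * ‖q‖ ^ (H*(h:ℝ)*(h:ℝ)/4) *
            (∑ k ∈ Finset.range (P.natDegree+1), ‖P.coeff k‖ * ((k:ℝ)+1)^2) ≤ c :=
          le_max_right _ _
        have hqh : (0:ℝ) < ‖q‖ ^ (H*(h:ℝ)*(h:ℝ)/4) := Real.rpow_pos_of_pos hq0 _
        have hGn : (1:ℝ) ≤ G ^ n := one_le_pow₀ hG1
        have hstep : ‖P.coeff n‖ * ((n:ℝ)+1)^2 ≤
            m/2 * (‖q‖ ^ (-(H*(h:ℝ)*(h:ℝ)/4)) * c) := by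
          have hrw : ‖q‖ ^ (-(H*(h:ℝ)*(h:ℝ)/4)) = (‖q‖ ^ (H*(h:ℝ)*(h:ℝ)/4))⁻¹ :=
            Real.rpow_neg (le_of_lt hq0) _
          rw [hrw]
          have h6 : (2/m) * ‖q‖ ^ (H*(h:ℝ)*(h:ℝ)/4) * (‖P.coeff n‖ * ((n:ℝ)+1)^2) ≤
              (2/m) * ‖q‖ ^ (H*(h:ℝ)*(h:ℝ)/4) *
              (∑ k ∈ Finset.range (P.natDegree+1), ‖P.coeff k‖ * ((k:ℝ)+1)^2) := by
            apply mul_le_mul_of_nonneg_left hterm (by positivity)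
          have h7 : (2/m) * ‖q‖ ^ (H*(h:ℝ)*(h:ℝ)/4) * (‖P.coeff n‖ * ((n:ℝ)+1)^2) ≤ c :=
            le_trans h6 hcge
          have hXne : (‖q‖ ^ (H*(h:ℝ)*(h:ℝ)/4)) ≠ 0 := ne_of_gt hqh
          have hm2 : m * (2/m) = 2 := by
            field_simp
          calc ‖P.coeff n‖ * ((n:ℝ)+1)^2
              = m/2 * ((‖q‖ ^ (H*(h:ℝ)*(h:ℝ)/4))⁻¹ *
                ((2/m) * ‖q‖ ^ (H*(h:ℝ)*(h:ℝ)/4) * (‖P.coeff n‖ * ((n:ℝ)+1)^2))) := by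
                have e9 : m/2 * ((‖q‖ ^ (H*(h:ℝ)*(h:ℝ)/4))⁻¹ *
                    ((2/m) * ‖q‖ ^ (H*(h:ℝ)*(h:ℝ)/4) * (‖P.coeff n‖ * ((n:ℝ)+1)^2))) =
                    (m * (2/m))/2 * ((‖q‖ ^ (H*(h:ℝ)*(h:ℝ)/4))⁻¹ * ‖q‖ ^ (H*(h:ℝ)*(h:ℝ)/4)) *
                    (‖P.coeff n‖ * ((n:ℝ)+1)^2) := by ring
                rw [e9, hm2, inv_mul_cancel₀ hXne]
                ring
            _ ≤ m/2 * ((‖q‖ ^ (H*(h:ℝ)*(h:ℝ)/4))⁻¹ * c) := by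
                apply mul_le_mul_of_nonneg_left _ (by positivity)
                apply mul_le_mul_of_nonneg_left h7 (by positivity)
        have hn2 : (0:ℝ) < ((n:ℝ)+1)^2 := by positivity
        rw [← sub_nonneg]
        have expand : m/2 * (‖q‖ ^ (H*n*((n:ℝ)-(h:ℝ))) * (c * G ^ n / ((n:ℝ)+1)^2)) - ‖P.coeff n‖ =
            ((m/2 * (‖q‖ ^ (H*n*((n:ℝ)-(h:ℝ))) * (c * G ^ n)) - ‖P.coeff n‖ * ((n:ℝ)+1)^2)) / ((n:ℝ)+1)^2 := by
          have hne2 : ((n:ℝ)+1)^2 ≠ 0 := by positivity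
          field_simp [hne2]
        rw [expand]
        apply div_nonneg _ (le_of_lt hn2)
        rw [sub_nonneg]
        calc ‖P.coeff n‖ * ((n:ℝ)+1)^2
            ≤ m/2 * (‖q‖ ^ (-(H*(h:ℝ)*(h:ℝ)/4)) * c) := hstep
          _ ≤ m/2 * (‖q‖ ^ (H*n*((n:ℝ)-(h:ℝ))) * c) := by
              apply mul_le_mul_of_nonneg_left _ (by positivity)
              apply mul_le_mul_of_nonneg_right hElow (le_of_lt hc0)
          _ ≤ m/2 * (‖q‖ ^ (H*n*((n:ℝ)-(h:ℝ))) * (c * G ^ n)) := by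
              apply mul_le_mul_of_nonneg_left _ (by positivity)
              apply mul_le_mul_of_nonneg_left _ (le_of_lt hEnn)
              nlinarith [mul_nonneg (le_of_lt hc0) (sub_nonneg.2 (one_le_pow₀ (n := n) hG1))]
      · rw [Polynomial.coeff_eq_zero_of_natDegree_lt hn, norm_zero]
        positivity
    have hSb : ∑ i ∈ Finset.univ.filter (fun i => ¬ (Q i).a = 0),
        ‖r i‖ * ‖PowerSeries.coeff n ((Q i).act q f)‖ ≤
        m/2 * (‖q‖ ^ (H*n*((n:ℝ)-(h:ℝ))) * (c * G ^ n / ((n:ℝ)+1)^2)) := by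
      rcases Nat.eq_zero_or_pos n with rfl | hn1
      · have hz : ∀ i ∈ Finset.univ.filter (fun i => ¬ (Q i).a = 0),
            ‖r i‖ * ‖PowerSeries.coeff 0 ((Q i).act q f)‖ = 0 := by
          intro i hi
          have hia : (Q i).a ≠ 0 := (Finset.mem_filter.1 hi).2
          rw [QFactor.act, PowerSeries.coeff_X_pow_mul', if_neg (by omega)]
          simp
        rw [Finset.sum_congr rfl hz, Finset.sum_const, smul_zero]
        positivity
      · have hib : ∀ i ∈ Finset.univ.filter (fun i => ¬ (Q i).a = 0),
            ‖r i‖ * ‖PowerSeries.coeff n ((Q i).act q f)‖ ≤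
            (‖r i‖ * (16 ^ (Q i).alpha.length * ‖q‖ ^ (H*((Q i).a:ℝ)^2 + H*(h:ℝ)*((Q i).a:ℝ) +
              |((Q i).alphaLast:ℝ)| * ((Q i).a:ℝ)) * (((Q i).a:ℝ)+1)^2)) * c^Λ *
              (‖q‖ ^ (H*n*((n:ℝ)-(h:ℝ))) * G ^ (n-1) / ((n:ℝ)+1)^2) := by
          intro i hi
          have hia : 0 < (Q i).a := Nat.pos_of_ne_zero (Finset.mem_filter.1 hi).2
          have hsb := shiftBound q hq f H (h:ℝ) hH0 c G hc1 hG1 (Q i) hia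
            (hcrest i hia) n (fun k hk => IH k hk)
          have hlΛ : (Q i).alpha.length ≤ Λ := by
            rw [hΛdef]
            exact Finset.le_sup (f := fun i : Fin N => (Q i).alpha.length) (Finset.mem_univ i)
          have hcΛ : c ^ (Q i).alpha.length ≤ c ^ Λ := pow_le_pow_right₀ hc1 hlΛ
          calc ‖r i‖ * ‖PowerSeries.coeff n ((Q i).act q f)‖
              ≤ ‖r i‖ * ((16 ^ (Q i).alpha.length * ‖q‖ ^ (H*((Q i).a:ℝ)^2 + H*(h:ℝ)*((Q i).a:ℝ) +
                  |((Q i).alphaLast:ℝ)| * ((Q i).a:ℝ)) * (((Q i).a:ℝ)+1)^2) * c ^ (Q i).alpha.length *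
                  (‖q‖ ^ (H*n*((n:ℝ)-(h:ℝ))) * G ^ (n-1) / ((n:ℝ)+1)^2)) :=
                mul_le_mul_of_nonneg_left hsb (norm_nonneg _)
            _ ≤ ‖r i‖ * ((16 ^ (Q i).alpha.length * ‖q‖ ^ (H*((Q i).a:ℝ)^2 + H*(h:ℝ)*((Q i).a:ℝ) +
                  |((Q i).alphaLast:ℝ)| * ((Q i).a:ℝ)) * (((Q i).a:ℝ)+1)^2) * c ^ Λ *
                  (‖q‖ ^ (H*n*((n:ℝ)-(h:ℝ))) * G ^ (n-1) / ((n:ℝ)+1)^2)) := by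
                apply mul_le_mul_of_nonneg_left _ (norm_nonneg _)
                apply mul_le_mul_of_nonneg_right _ (by positivity)
                apply mul_le_mul_of_nonneg_left hcΛ (by positivity)
            _ = (‖r i‖ * (16 ^ (Q i).alpha.length * ‖q‖ ^ (H*((Q i).a:ℝ)^2 + H*(h:ℝ)*((Q i).a:ℝ) +
                  |((Q i).alphaLast:ℝ)| * ((Q i).a:ℝ)) * (((Q i).a:ℝ)+1)^2)) * c^Λ *
                  (‖q‖ ^ (H*n*((n:ℝ)-(h:ℝ))) * G ^ (n-1) / ((n:ℝ)+1)^2) := by ring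
        calc ∑ i ∈ Finset.univ.filter (fun i => ¬ (Q i).a = 0),
              ‖r i‖ * ‖PowerSeries.coeff n ((Q i).act q f)‖
            ≤ ∑ i ∈ Finset.univ.filter (fun i => ¬ (Q i).a = 0),
              (‖r i‖ * (16 ^ (Q i).alpha.length * ‖q‖ ^ (H*((Q i).a:ℝ)^2 + H*(h:ℝ)*((Q i).a:ℝ) +
                |((Q i).alphaLast:ℝ)| * ((Q i).a:ℝ)) * (((Q i).a:ℝ)+1)^2)) * c^Λ *
                (‖q‖ ^ (H*n*((n:ℝ)-(h:ℝ))) * G ^ (n-1) / ((n:ℝ)+1)^2) := Finset.sum_le_sum hib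
          _ = B * c^Λ * (‖q‖ ^ (H*n*((n:ℝ)-(h:ℝ))) * G ^ (n-1) / ((n:ℝ)+1)^2) := by
              rw [hBdef, Finset.sum_mul, Finset.sum_mul]
          _ ≤ m/2 * G * (‖q‖ ^ (H*n*((n:ℝ)-(h:ℝ))) * G ^ (n-1) / ((n:ℝ)+1)^2) := by
              apply mul_le_mul_of_nonneg_right _ (by positivity)
              have hGge : (2/m) * c^Λ * B ≤ G := le_max_right _ _
              have : B * c^Λ = m/2 * ((2/m) * c^Λ * B) := by field_simp
              rw [this]
              apply mul_le_mul_of_nonneg_left hGge (by positivity)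
          _ = m/2 * (‖q‖ ^ (H*n*((n:ℝ)-(h:ℝ))) * (G * G ^ (n-1)) / ((n:ℝ)+1)^2) := by ring
          _ = m/2 * (‖q‖ ^ (H*n*((n:ℝ)-(h:ℝ))) * G ^ n / ((n:ℝ)+1)^2) := by
              have hGn : G * G ^ (n-1) = G ^ n := by
                have hne : n - 1 + 1 = n := by omega
                rw [← pow_succ', hne]
              rw [hGn]
          _ ≤ m/2 * (‖q‖ ^ (H*n*((n:ℝ)-(h:ℝ))) * (c * G ^ n) / ((n:ℝ)+1)^2) := by
              have h9 : G ^ n ≤ c * G ^ n := by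
                nlinarith [pow_nonneg (le_trans zero_le_one hG1) n]
              gcongr
          _ = m/2 * (‖q‖ ^ (H*n*((n:ℝ)-(h:ℝ))) * (c * G ^ n / ((n:ℝ)+1)^2)) := by ring
    have htotal : m * ‖PowerSeries.coeff n f‖ ≤
        m * (‖q‖ ^ (H*n*((n:ℝ)-(h:ℝ))) * (c * G ^ n / ((n:ℝ)+1)^2)) := by linarith
    exact le_of_mul_le_mul_left htotal hm0
  -- conclusion
  refine ⟨c, hc0, G, hG0, fun n => ?_⟩
  rw [norm_mul, norm_cpow' q L hL]
  calc ‖q‖ ^ (-(H * n * ((n:ℝ) - (h:ℝ)))) * ‖PowerSeries.coeff n f‖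
      ≤ ‖q‖ ^ (-(H * n * ((n:ℝ) - (h:ℝ)))) *
        (‖q‖ ^ (H*n*((n:ℝ)-(h:ℝ))) * (c * G ^ n / ((n:ℝ)+1)^2)) := by
        apply mul_le_mul_of_nonneg_left (key n) (le_of_lt (Real.rpow_pos_of_pos hq0 _))
    _ = c * G ^ n / ((n:ℝ)+1)^2 := by
        rw [← mul_assoc, ← Real.rpow_add hq0]
        simp
    _ ≤ c * G ^ n := by
        apply div_le_self (by positivity)
        nlinarith [Nat.cast_nonneg (α := ℝ) n]
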